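/- If M is a countable type carrying the discrete topology, then the set of continuous functions from the Cantor space (ℕ → Bool with the product topology) to M is countable. -/
import Mathlib

open Set

/-- A cylinder set in Cantor space is open. -/
lemma cantor_cylinder_isOpen (z : ℕ → Bool) (m : ℕ) :
    IsOpen {y : ℕ → Bool | ∀ i < m, y i = z i} := by
  have h : {y : ℕ → Bool | ∀ i < m, y i = z i} =
      ⋂ i ∈ Finset.range m, (fun y : ℕ → Bool => y i) ⁻¹' {z i} := by
    ext y
    simp [Set.mem_iInter]
  rw [h]
  exact isOpen_biInter_finset fun i _ =>
    (isOpen_discrete _).preimage (continuous_apply i)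

/-- A continuous map from Cantor space to a discrete space depends only on
finitely many coordinates. -/
lemma cantor_key {M : Type*} [TopologicalSpace M] [DiscreteTopology M]
    {f : (ℕ → Bool) → M} (hf : Continuous f) :
    ∃ n : ℕ, ∀ x y : ℕ → Bool, (∀ i < n, x i = y i) → f x = f y := by
  have hx : ∀ x : ℕ → Bool, ∃ n : ℕ, ∀ y, (∀ i < n, y i = x i) → f y = f x := by
    intro x
    have ho : IsOpen (f ⁻¹' {f x}) := (isOpen_discrete _).preimage hf
    rw [isOpen_pi_iff] at ho
    obtain ⟨I, u, hu, hsub⟩ := ho x rfl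
    refine ⟨(I.sup id) + 1, fun y hy => ?_⟩
    have hmem : y ∈ (↑I : Set ℕ).pi u := by
      intro i hi
      have hyi : y i = x i :=
        hy i (Nat.lt_succ_of_le (Finset.le_sup (f := id) hi))
      rw [hyi]
      exact (hu i hi).2
    exact hsub hmem
  choose n hn using hx
  obtain ⟨t, ht⟩ := isCompact_univ.elim_finite_subcover
    (fun z : ℕ → Bool => {y | ∀ i < n z, y i = z i})
    (fun z => cantor_cylinder_isOpen z (n z))
    (fun y _ => Set.mem_iUnion.2 ⟨y, fun i _ => rfl⟩)
  refine ⟨t.sup n, fun x y hxy => ?_⟩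
  obtain ⟨z, hz, hxz⟩ := Set.mem_iUnion₂.1 (ht (Set.mem_univ x))
  have hnz : n z ≤ t.sup n := Finset.le_sup hz
  have hyz : y ∈ {w | ∀ i < n z, w i = z i} := by
    intro i hi
    rw [← hxy i (lt_of_lt_of_le hi hnz)]
    exact hxz i hi
  rw [hn z x hxz, hn z y hyz]

/-- If `M` is countable and discrete, the set of continuous functions from the Cantor
space to `M` is countable. -/
theorem countable_continuous_functions_from_cantor {M : Type*} [TopologicalSpace M]
    [DiscreteTopology M] [Countable M] :
    {f : (ℕ → Bool) → M | Continuous f}.Countable := by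
  rw [← Set.countable_coe_iff]
  have hkey : ∀ f : {f : (ℕ → Bool) → M | Continuous f},
      ∃ m : ℕ, ∀ x y : ℕ → Bool, (∀ i < m, x i = y i) → f.1 x = f.1 y :=
    fun f => cantor_key f.2
  choose n hn using hkey
  let ext : ∀ (m : ℕ), (Fin m → Bool) → (ℕ → Bool) :=
    fun m v i => if h : i < m then v ⟨i, h⟩ else false
  have key : ∀ (f : {f : (ℕ → Bool) → M | Continuous f}) (x : ℕ → Bool), f.1 x = f.1 (ext (n f) (fun i => x i)) := by
    intro f x
    refine hn f x _ (fun i hi => ?_)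
    simp [ext, hi]
  have : Countable (Σ m : ℕ, ((Fin m → Bool) → M)) := inferInstance
  refine Function.Injective.countable
    (f := fun f : {f : (ℕ → Bool) → M | Continuous f} =>
      (⟨n f, fun v => f.1 (ext (n f) v)⟩ : Σ m : ℕ, ((Fin m → Bool) → M))) ?_
  intro f g hfg
  have h2 : ∀ v : ℕ → Bool,
      f.1 (ext (n f) fun i => v i) = g.1 (ext (n g) fun i => v i) :=
    fun v => congrArg
      (fun p : Σ m : ℕ, ((Fin m → Bool) → M) => p.2 (fun i : Fin p.1 => v i)) hfg
  apply Subtype.ext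
  funext x
  rw [key f x, key g x]
  exact h2 x
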